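/- Let D_{i−} = {x ∈ ℝ^{dn+2} : |x_i − x_{i+1}| ≥ x̆_-} and let x ∈ A_c satisfy |x_i − x_{i+1}| = x̆_-. Then, with α = r_- √3/2, the open ball of radius α centered at x − α n_{i−}(x) is disjoint from D_{i−}; i.e. D_{i−} has the Uniform Exterior Sphere property restricted to A_c with constant r_- √3/2. -/

import Mathlib

open scoped RealInnerProductSpace

noncomputable section

variable {H : Type*} [NormedAddCommGroup H] [InnerProductSpace ℝ H]

/-- The set `N^D_{x,α}` of inward unit normal vectors to `D` at `x` with constant `α`. -/
def normalSet (D : Set H) (x : H) (α : ℝ) : Set H :=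
  {v | ‖v‖ = 1 ∧ Metric.ball (x - α • v) α ∩ D = ∅}

/-- The set `N^D_x = ⋃_{α>0} N^D_{x,α}` of inward unit normal vectors to `D` at `x`. -/
def normalCone (D : Set H) (x : H) : Set H :=
  ⋃ α ∈ Set.Ioi (0 : ℝ), normalSet D x α

/-- `D` satisfies the Uniform Exterior Sphere property with constant `α`. -/
def UES (D : Set H) (α : ℝ) : Prop :=
  ∀ x ∈ frontier D, normalCone D x = normalSet D x α ∧ (normalSet D x α).Nonempty

/-- `D` satisfies the Uniform Normal Cone property with constants `β`, `δ`. -/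
def UNC (D : Set H) (β δ : ℝ) : Prop :=
  ∀ x ∈ frontier D, ∃ l : H, ‖l‖ = 1 ∧
    ∀ y ∈ frontier D, ‖y - x‖ ≤ δ → ∀ v ∈ normalCone D y, ⟪v, l⟫ ≥ Real.sqrt (1 - β ^ 2)

/-- The configuration space `ℝ^{dn+2}` of chains of `n` particles in `ℝ^d` together with the
minimum and maximum bond lengths `(x̆₋, x̆₊)`, carrying the Euclidean (`L²`) norm. -/
abbrev CConf (d n : ℕ) : Type :=
  WithLp 2 ((PiLp 2 fun _ : Fin n => EuclideanSpace ℝ (Fin d)) × WithLp 2 (ℝ × ℝ))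

variable {d n : ℕ}

/-- Position of the `i`-th particle of the chain. -/
def cC (x : CConf d n) (i : Fin n) : EuclideanSpace ℝ (Fin d) := x.fst i

/-- Minimum allowed bond length `x̆₋`. -/
def cMin (x : CConf d n) : ℝ := x.snd.fst

/-- Maximum allowed bond length `x̆₊`. -/
def cMax (x : CConf d n) : ℝ := x.snd.snd

/-- Build a chain configuration from particle positions and the two bond-length bounds. -/
def mkC (f : Fin n → EuclideanSpace ℝ (Fin d)) (a b : ℝ) : CConf d n :=
  (WithLp.equiv 2 _).symm ((WithLp.equiv 2 _).symm f, (WithLp.equiv 2 _).symm (a, b))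

/-- The set `A_c` of allowed chain configurations. -/
def Ac (d n : ℕ) (rm rp : ℝ) : Set (CConf d n) :=
  {x | rm ≤ cMin x ∧ cMin x ≤ cMax x ∧ cMax x ≤ rp ∧
    ∀ (i : Fin n) (h : (i : ℕ) + 1 < n),
      cMin x ≤ ‖cC x i - cC x ⟨(i : ℕ) + 1, h⟩‖ ∧
        ‖cC x i - cC x ⟨(i : ℕ) + 1, h⟩‖ ≤ cMax x}

/-- The unit normal vector `n_{i−}(x)` to the constraint `|x_i − x_{i+1}| ≥ x̆₋`, at a
configuration `x` with `|x_i − x_{i+1}| = x̆₋ > 0`. -/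
def cnm (x : CConf d n) (i : Fin n) (h : (i : ℕ) + 1 < n) : CConf d n :=
  mkC (fun k =>
      if k = i then (cMin x * Real.sqrt 3)⁻¹ • (cC x i - cC x ⟨(i : ℕ) + 1, h⟩)
      else if k = ⟨(i : ℕ) + 1, h⟩ then
        (cMin x * Real.sqrt 3)⁻¹ • (cC x ⟨(i : ℕ) + 1, h⟩ - cC x i)
      else 0)
    (-(Real.sqrt 3)⁻¹) 0

/-- The unit normal vector `n_{i+}(x)` to the constraint `|x_i − x_{i+1}| ≤ x̆₊`, at a
configuration `x` with `|x_i − x_{i+1}| = x̆₊ > 0`. -/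
def cnp (x : CConf d n) (i : Fin n) (h : (i : ℕ) + 1 < n) : CConf d n :=
  mkC (fun k =>
      if k = i then (cMax x * Real.sqrt 3)⁻¹ • (cC x ⟨(i : ℕ) + 1, h⟩ - cC x i)
      else if k = ⟨(i : ℕ) + 1, h⟩ then
        (cMax x * Real.sqrt 3)⁻¹ • (cC x i - cC x ⟨(i : ℕ) + 1, h⟩)
      else 0)
    0 (Real.sqrt 3)⁻¹

/-- The unit normal vector `n₋ = (0,…,0,1,0)` to the constraint `x̆₋ ≥ r₋`. -/
def cnmin (d n : ℕ) : CConf d n := mkC 0 1 0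

/-- The unit normal vector `n₊ = (0,…,0,0,−1)` to the constraint `x̆₊ ≤ r₊`. -/
def cnmax (d n : ℕ) : CConf d n := mkC 0 0 (-1)

/-- The unit normal vector `n₌ = (0,…,0,−1/√2,1/√2)` to the constraint `x̆₋ ≤ x̆₊`. -/
def cneq (d n : ℕ) : CConf d n := mkC 0 (-(Real.sqrt 2)⁻¹) (Real.sqrt 2)⁻¹

end

/-- The bond-length lower-bound constraint set `D_{i−} = {x : |x_i − x_{i+1}| ≥ x̆₋}`. -/
def Dim (d n : ℕ) (i : Fin n) (h : (i : ℕ) + 1 < n) : Set (CConf d n) :=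
  {x | ‖cC x i - cC x ⟨(i : ℕ) + 1, h⟩‖ ≥ cMin x}

/-!
Write a point of the ball as `y = c + z` with `c = x - t • n_{i−}(x)` and `‖z‖ < t`. The centre
has bond `c_i - c_{i+1} = (1 - 2t/(x̆₋√3)) (x_i - x_{i+1})`, of length `x̆₋ - 2t/√3` as long as
`t ≤ x̆₋√3/2`, and lower bound `c̆₋ = x̆₋ + t/√3`. Hence `y ∈ D_{i−}` forces
`|z_i| + |z_{i+1}| - z̆₋ ≥ 3t/√3 = √3 t`, whereas Cauchy–Schwarz in `ℝ³` bounds the left side by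
`√3 ‖z‖ < √3 t`. Since `r₋ ≤ x̆₋` on `A_c`, the radius `r₋√3/2` is admissible.
-/

section ChainGeometry

variable {d n : ℕ}

@[simp] lemma cC_sub (x y : CConf d n) (i : Fin n) : cC (x - y) i = cC x i - cC y i := rfl

@[simp] lemma cC_smul (t : ℝ) (x : CConf d n) (i : Fin n) : cC (t • x) i = t • cC x i := rfl

@[simp] lemma cMin_sub (x y : CConf d n) : cMin (x - y) = cMin x - cMin y := rfl

@[simp] lemma cMin_smul (t : ℝ) (x : CConf d n) : cMin (t • x) = t * cMin x := rfl

lemma sq_norm_cC_add_sq_norm_cC_add_sq_cMin_le (z : CConf d n) {i j : Fin n} (hij : i ≠ j) :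
    ‖cC z i‖ ^ 2 + ‖cC z j‖ ^ 2 + cMin z ^ 2 ≤ ‖z‖ ^ 2 := by
  have hfst : ‖cC z i‖ ^ 2 + ‖cC z j‖ ^ 2 ≤ ‖z.fst‖ ^ 2 :=
    calc ‖cC z i‖ ^ 2 + ‖cC z j‖ ^ 2 = ∑ k ∈ {i, j}, ‖z.fst k‖ ^ 2 :=
        (Finset.sum_pair (f := fun k => ‖z.fst k‖ ^ 2) hij).symm
      _ ≤ ∑ k, ‖z.fst k‖ ^ 2 :=
        Finset.sum_le_sum_of_subset_of_nonneg (Finset.subset_univ _) fun _ _ _ => by positivity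
      _ = ‖z.fst‖ ^ 2 := (PiLp.norm_sq_eq_of_L2 _ _).symm
  have hsnd : cMin z ^ 2 ≤ ‖z.snd‖ ^ 2 := by
    rw [WithLp.prod_norm_sq_eq_of_L2, Real.norm_eq_abs, sq_abs]
    exact le_add_of_nonneg_right (sq_nonneg _)
  rw [WithLp.prod_norm_sq_eq_of_L2 z]
  linarith

lemma norm_cC_add_norm_cC_sub_cMin_le (z : CConf d n) {i j : Fin n} (hij : i ≠ j) :
    ‖cC z i‖ + ‖cC z j‖ - cMin z ≤ Real.sqrt 3 * ‖z‖ := by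
  rw [← Real.sqrt_sq (norm_nonneg z), ← Real.sqrt_mul (by norm_num)]
  apply Real.le_sqrt_of_sq_le
  nlinarith [sq_norm_cC_add_sq_norm_cC_add_sq_cMin_le z hij, sq_nonneg (‖cC z i‖ - ‖cC z j‖),
    sq_nonneg (‖cC z i‖ + cMin z), sq_nonneg (‖cC z j‖ + cMin z)]

variable {x : CConf d n} {i : Fin n} {h : (i : ℕ) + 1 < n}

lemma cC_cnm_self :
    cC (cnm x i h) i = (cMin x * Real.sqrt 3)⁻¹ • (cC x i - cC x ⟨(i : ℕ) + 1, h⟩) :=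
  if_pos rfl

lemma cC_cnm_succ : cC (cnm x i h) ⟨(i : ℕ) + 1, h⟩ =
    -(cMin x * Real.sqrt 3)⁻¹ • (cC x i - cC x ⟨(i : ℕ) + 1, h⟩) := by
  have hne : (⟨(i : ℕ) + 1, h⟩ : Fin n) ≠ i := by simp [Fin.ext_iff]
  show (if _ then _ else _) = _
  rw [if_neg hne, if_pos rfl, neg_smul, ← smul_neg, neg_sub]

lemma cMin_cnm : cMin (cnm x i h) = -(Real.sqrt 3)⁻¹ := rfl

lemma cC_sub_cC_sub_smul_cnm (t : ℝ) :
    cC (x - t • cnm x i h) i - cC (x - t • cnm x i h) ⟨(i : ℕ) + 1, h⟩ =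
      (1 - 2 * t / (cMin x * Real.sqrt 3)) • (cC x i - cC x ⟨(i : ℕ) + 1, h⟩) := by
  simp only [cC_sub, cC_smul, cC_cnm_self, cC_cnm_succ]
  match_scalars <;> ring

lemma cMin_sub_smul_cnm (t : ℝ) :
    cMin (x - t • cnm x i h) = cMin x + t / Real.sqrt 3 := by
  rw [cMin_sub, cMin_smul, cMin_cnm]
  ring

theorem ball_sub_smul_cnm_inter_Dim_eq_empty
    (hcol : ‖cC x i - cC x ⟨(i : ℕ) + 1, h⟩‖ = cMin x) {t : ℝ}
    (ht : t ≤ cMin x * Real.sqrt 3 / 2) :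
    Metric.ball (x - t • cnm x i h) t ∩ Dim d n i h = ∅ := by
  refine Set.eq_empty_of_forall_notMem ?_
  rintro y ⟨hy, hyD : cMin y ≤ ‖cC y i - cC y ⟨(i : ℕ) + 1, h⟩‖⟩
  set c := x - t • cnm x i h
  set z := y - c
  have hs3 : 0 < Real.sqrt 3 := by positivity
  have hs3sq : Real.sqrt 3 * Real.sqrt 3 = 3 := Real.mul_self_sqrt (by norm_num)
  have ht0 : 0 < t := dist_nonneg.trans_lt hy
  have hm : 0 < cMin x := by nlinarith
  have hz : ‖z‖ < t := by rwa [← dist_eq_norm]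
  have hne : i ≠ ⟨(i : ℕ) + 1, h⟩ := by simp [Fin.ext_iff]
  have hbond : ‖cC y i - cC y ⟨(i : ℕ) + 1, h⟩‖ ≤
      ‖cC z i‖ + ‖cC z ⟨(i : ℕ) + 1, h⟩‖ + (cMin x - 2 * (t / Real.sqrt 3)) :=
    calc ‖cC y i - cC y ⟨(i : ℕ) + 1, h⟩‖
        = ‖(cC z i - cC z ⟨(i : ℕ) + 1, h⟩) + (cC c i - cC c ⟨(i : ℕ) + 1, h⟩)‖ := by
          simp only [z, cC_sub]; abel_nf
      _ ≤ ‖cC z i‖ + ‖cC z ⟨(i : ℕ) + 1, h⟩‖ + ‖cC c i - cC c ⟨(i : ℕ) + 1, h⟩‖ :=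
          (norm_add_le _ _).trans (add_le_add_left (norm_sub_le _ _) _)
      _ = _ := by
          have hcoef : 0 ≤ 1 - 2 * t / (cMin x * Real.sqrt 3) := by
            rw [sub_nonneg, div_le_one (by positivity)]; linarith
          rw [cC_sub_cC_sub_smul_cnm, norm_smul, hcol, Real.norm_of_nonneg hcoef]
          field_simp
  have hmin : cMin y = cMin z + (cMin x + t / Real.sqrt 3) := by
    rw [cMin_sub, cMin_sub_smul_cnm]; ring
  have hCS := norm_cC_add_norm_cC_sub_cMin_le z hne
  have hthree : 3 * (t / Real.sqrt 3) = Real.sqrt 3 * t := by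
    field_simp; linarith
  have hfar : Real.sqrt 3 * t ≤ Real.sqrt 3 * ‖z‖ := by linarith
  exact hz.not_ge (le_of_mul_le_mul_left hfar hs3)

end ChainGeometry

theorem stmt_18_general (d n : ℕ) (rm rp : ℝ) (i : Fin n) (h : (i : ℕ) + 1 < n)
    (x : CConf d n) (hx : x ∈ Ac d n rm rp)
    (hcol : ‖cC x i - cC x ⟨(i : ℕ) + 1, h⟩‖ = cMin x) :
    Metric.ball (x - (rm * Real.sqrt 3 / 2) • cnm x i h) (rm * Real.sqrt 3 / 2) ∩
      Dim d n i h = ∅ :=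
  ball_sub_smul_cnm_inter_Dim_eq_empty hcol (by gcongr; exact hx.1)

/-- If `x ∈ A_c` satisfies `|x_i − x_{i+1}| = x̆₋` then, with
`α = r₋√3/2`, the open ball of radius `α` centered at `x − α n_{i−}(x)` is disjoint from
`D_{i−}`: `D_{i−}` has the Uniform Exterior Sphere property restricted to `A_c` with constant
`r₋√3/2`. -/
theorem stmt_18 (d n : ℕ) (hd : 2 ≤ d) (hn : 2 ≤ n) (rm rp : ℝ)
    (h0 : 0 < rm) (hr : rm < rp) (i : Fin n) (h : (i : ℕ) + 1 < n)
    (x : CConf d n) (hx : x ∈ Ac d n rm rp)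
    (hcol : ‖cC x i - cC x ⟨(i : ℕ) + 1, h⟩‖ = cMin x) :
    Metric.ball (x - (rm * Real.sqrt 3 / 2) • cnm x i h) (rm * Real.sqrt 3 / 2) ∩
      Dim d n i h = ∅ :=
  stmt_18_general d n rm rp i h x hx hcol
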